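/- Weak subobjects in Rec correspond to subobjects in assemblies: for every A ⊆ ℕ, the map sending the class of a morphism f : B → A of Rec to the subobject of Sgl(A) in Asm represented by the monomorphism j : (f(B), c ↦ {b ∈ B : f(b) = c}) → Sgl(A), whose underlying function is the inclusion of the image f(B) into A, is an order-isomorphism between wSub_Rec(A) and Sub_Asm(Sgl(A)), and these isomorphisms are natural in A (they commute with reindexing by pullback along morphisms of Rec). -/

import Mathlib

open CategoryTheory

namespace RecPaper

/-- Kleene application `{e}(n)`: apply the partial recursive function with Gödel code `e`
to the input `n`. -/
def kap (e n : ℕ) : Part ℕ :=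
  Nat.Partrec.Code.eval (Denumerable.ofNat Nat.Partrec.Code e) n

/-- The type of objects of the category `Rec`: subsets of `ℕ`. -/
def RecCat : Type := Set ℕ

/-- The underlying subset of `ℕ` of an object of `Rec`. -/
def RecCat.carrier (A : RecCat) : Set ℕ := A

/-- View a subset of `ℕ` as an object of `Rec`. -/
def RecCat.ofSet (A : Set ℕ) : RecCat := A

instance : CoeSort RecCat Type := ⟨fun A => {n : ℕ // n ∈ A.carrier}⟩

/-- A function between subsets of `ℕ` is *tracked* if there is a partial recursive
function, defined on the whole domain, whose restriction to the domain is the given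
function. -/
def Tracked {A B : RecCat} (f : A → B) : Prop :=
  ∃ g : ℕ →. ℕ, Nat.Partrec g ∧ ∀ a : A, g a.val = Part.some (f a).val

/-- The category `Rec` of subsets of `ℕ` and restrictions of partial recursive functions. -/
instance : Category RecCat where
  Hom A B := {f : A → B // Tracked f}
  id A := ⟨fun a => a, (fun n => n : ℕ → ℕ), Nat.Partrec.of_primrec Nat.Primrec.id,
    fun _ => rfl⟩
  comp {A B C} f g := ⟨fun a => g.1 (f.1 a), by
    obtain ⟨u, pu, hu⟩ := f.2
    obtain ⟨v, pv, hv⟩ := g.2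
    refine ⟨fun n => u n >>= v, pv.comp pu, fun a => ?_⟩
    show u a.val >>= v = _
    rw [hu a]; exact (Part.bind_some _ v).trans (hv (f.1 a))⟩
  id_comp _ := rfl
  comp_id _ := rfl
  assoc _ _ _ := rfl

/-- The underlying function of a morphism of `Rec`. -/
def hfun {A B : RecCat} (f : A ⟶ B) : A → B := f.1

/-- The value of a morphism of `Rec` on an element, as a natural number. -/
def happ {A B : RecCat} (f : A ⟶ B) (a : A) : ℕ := (hfun f a).val


/-- Objects of the category `Asm` of assemblies: a set together with nonempty sets of
realizers. -/
structure AsmObj : Type 1 where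
  carrier : Type
  real : carrier → Set ℕ
  hne : ∀ a, (real a).Nonempty

/-- Tracking for functions between assemblies: some partial recursive function sends
realizers of `a` to realizers of `f a`. -/
def AsmTracked {X Y : AsmObj} (f : X.carrier → Y.carrier) : Prop :=
  ∃ g : ℕ →. ℕ, Nat.Partrec g ∧
    ∀ a : X.carrier, ∀ n ∈ X.real a, ∃ v ∈ Y.real (f a), g n = Part.some v

/-- The category `Asm` of assemblies. -/
instance : Category AsmObj where
  Hom X Y := {f : X.carrier → Y.carrier // AsmTracked f}
  id X := ⟨fun a => a, (fun n => n : ℕ → ℕ), Nat.Partrec.of_primrec Nat.Primrec.id,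
    fun _ n hn => ⟨n, hn, rfl⟩⟩
  comp {X Y Z} f g := ⟨fun a => g.1 (f.1 a), by
    obtain ⟨u, pu, hu⟩ := f.2
    obtain ⟨v, pv, hv⟩ := g.2
    refine ⟨fun n => u n >>= v, pv.comp pu, fun a n hn => ?_⟩
    obtain ⟨m, hm, hum⟩ := hu a n hn
    obtain ⟨w, hw, hvw⟩ := hv (f.1 a) m hm
    exact ⟨w, hw, by
      show u n >>= v = _
      rw [hum]; exact (Part.bind_some _ v).trans hvw⟩⟩
  id_comp _ := rfl
  comp_id _ := rfl
  assoc _ _ _ := rfl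

/-- An assembly is partitioned if every set of realizers is a singleton. -/
def AsmObj.IsPartitioned (X : AsmObj) : Prop := ∀ a, ∃ n, X.real a = {n}

/-- An assembly is modest if distinct elements have disjoint sets of realizers. -/
def AsmObj.IsModest (X : AsmObj) : Prop :=
  ∀ a b, (X.real a ∩ X.real b).Nonempty → a = b

/-- The assembly `(A, a ↦ {a})` attached to an object of `Rec`. -/
def SglObj (A : RecCat) : AsmObj :=
  ⟨{n : ℕ // n ∈ A.carrier}, fun a => {a.val}, fun a => ⟨a.val, rfl⟩⟩

/-- The functor `Sgl : Rec ⥤ Asm` sending `A` to `(A, a ↦ {a})` and each morphism to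
itself. -/
def Sgl : RecCat ⥤ AsmObj where
  obj A := SglObj A
  map {A B} f := ⟨fun a => hfun f a, by
    obtain ⟨g, pg, hg⟩ := f.2
    refine ⟨g, pg, fun a n hn => ⟨(hfun f a).val, rfl, ?_⟩⟩
    have hna : n = a.val := hn
    rw [hna]
    exact hg a⟩
  map_id _ := rfl
  map_comp _ _ := rfl


/-- The image `f(B) ⊆ ℕ` of a morphism of `Rec`. -/
def imageSet {B A : RecCat} (f : B ⟶ A) : Set ℕ := {c | ∃ b : B, happ f b = c}

/-- The image assembly `(f(B), c ↦ {b ∈ B : f(b) = c})` of a morphism of `Rec`. -/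
def imAsm {B A : RecCat} (f : B ⟶ A) : AsmObj where
  carrier := {c : ℕ // c ∈ imageSet f}
  real c := {b | ∃ hb : b ∈ B.carrier, happ f ⟨b, hb⟩ = c.val}
  hne c := by
    obtain ⟨b, hb⟩ := c.2
    exact ⟨b.val, b.2, hb⟩

/-- The canonical monomorphism `imAsm f ⟶ Sgl A`, whose underlying function is the
inclusion of the image `f(B)` into `A`. -/
def jHom {B A : RecCat} (f : B ⟶ A) : imAsm f ⟶ SglObj A :=
  ⟨fun c => ⟨c.val, by obtain ⟨b, hb⟩ := c.2; rw [← hb]; exact (hfun f b).2⟩, by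
    obtain ⟨g, pg, hg⟩ := f.2
    refine ⟨g, pg, fun c n hn => ?_⟩
    obtain ⟨hb, hfb⟩ := hn
    exact ⟨c.val, rfl, by rw [← hfb]; exact hg ⟨n, hb⟩⟩⟩

/-!
A morphism into `Sgl A` is determined by its underlying function, and a mono into the modest
assembly `Sgl A` has a modest domain: each realizer realizes exactly one element. Such a
subobject is therefore recovered as the image assembly of the morphism of `Rec` that sends each
realizer to the image of the element it realizes. Factorizations on either side are witnessed by
the same trackers, and pullbacks in `Rec`, computed on Cantor-paired realizers, supply the tracker
that makes the pullback of `jHom f` in `Asm` factor through `jHom` of the pullback in `Rec`.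
-/

theorem RecCat.hom_ext {A B : RecCat} {u v : A ⟶ B} (h : ∀ a, hfun u a = hfun v a) : u = v :=
  Subtype.ext (funext h)

theorem AsmObj.hom_ext {X Y : AsmObj} {u v : X ⟶ Y} (h : ∀ x, u.1 x = v.1 x) : u = v :=
  Subtype.ext (funext h)

def AsmObj.point : AsmObj := ⟨PUnit, fun _ => Set.univ, fun _ => ⟨0, trivial⟩⟩

def AsmObj.elem {X : AsmObj} (x : X.carrier) : AsmObj.point ⟶ X :=
  ⟨fun _ => x, (fun _ => (X.hne x).some : ℕ → ℕ),
    Nat.Partrec.of_primrec (Nat.Primrec.const _), fun _ _ _ => ⟨_, (X.hne x).some_mem, rfl⟩⟩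

theorem AsmObj.mono_of_injective {X Y : AsmObj} (m : X ⟶ Y) (hm : Function.Injective m.1) :
    Mono m :=
  ⟨fun _ _ huv => AsmObj.hom_ext fun z => hm (congrFun (congrArg Subtype.val huv) z)⟩

theorem AsmObj.injective_of_mono {X Y : AsmObj} (m : X ⟶ Y) [Mono m] : Function.Injective m.1 :=
  fun x y hxy =>
    have hcomp : AsmObj.elem x ≫ m = AsmObj.elem y ≫ m := AsmObj.hom_ext fun _ => hxy
    congrFun (congrArg Subtype.val ((cancel_mono m).1 hcomp)) PUnit.unit

theorem AsmObj.IsModest.of_mono {X Y : AsmObj} (m : X ⟶ Y) [Mono m] (hY : Y.IsModest) :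
    X.IsModest := by
  rintro x y ⟨n, hx, hy⟩
  obtain ⟨u, -, hu⟩ := m.2
  obtain ⟨v, hv, hun⟩ := hu x n hx
  obtain ⟨v', hv', hun'⟩ := hu y n hy
  have hvv' : v = v' := Part.some_inj.1 (hun.symm.trans hun')
  exact AsmObj.injective_of_mono m (hY _ _ ⟨v, hv, hvv' ▸ hv'⟩)

theorem isModest_sglObj (A : RecCat) : (SglObj A).IsModest := by
  rintro a b ⟨n, ha, hb⟩
  exact Subtype.ext ((ha : n = a.val).symm.trans hb)

theorem mono_jHom {B A : RecCat} (f : B ⟶ A) : Mono (jHom f) :=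
  AsmObj.mono_of_injective _ fun _ _ h =>
    Subtype.ext (congrArg (Subtype.val : {n // n ∈ A.carrier} → ℕ) h :)

theorem RecCat.exists_comp_eq_iff {A B C : RecCat} (f : B ⟶ A) (g : C ⟶ A) :
    (∃ h : B ⟶ C, h ≫ g = f) ↔
      ∃ t : ℕ →. ℕ, Nat.Partrec t ∧
        ∀ b : B, ∃ c : C, t b.val = Part.some c.val ∧ hfun g c = hfun f b := by
  constructor
  · rintro ⟨h, rfl⟩
    obtain ⟨t, ht, hh⟩ := h.2
    exact ⟨t, ht, fun b => ⟨h.1 b, hh b, rfl⟩⟩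
  · rintro ⟨t, ht, hc⟩
    choose c htc hgc using hc
    exact ⟨⟨c, t, ht, htc⟩, RecCat.hom_ext hgc⟩

/-- The underlying function of such a `k` is forced to be `m` itself, so only its tracker
matters. -/
theorem exists_comp_jHom_eq_iff {X : AsmObj} {A C : RecCat} (g : C ⟶ A) (m : X ⟶ SglObj A) :
    (∃ k : X ⟶ imAsm g, k ≫ jHom g = m) ↔
      ∃ t : ℕ →. ℕ, Nat.Partrec t ∧
        ∀ x, ∀ n ∈ X.real x, ∃ c : C, t n = Part.some c.val ∧ hfun g c = m.1 x := by
  constructor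
  · rintro ⟨k, rfl⟩
    obtain ⟨t, ht, hk⟩ := k.2
    refine ⟨t, ht, fun x n hn => ?_⟩
    obtain ⟨v, ⟨hv, hgv⟩, htv⟩ := hk x n hn
    exact ⟨⟨v, hv⟩, htv, Subtype.ext hgv⟩
  · rintro ⟨t, ht, hc⟩
    have mem : ∀ x, (m.1 x).val ∈ imageSet g := fun x =>
      have ⟨c, _, hgc⟩ := hc x _ (X.hne x).some_mem
      ⟨c, congrArg Subtype.val hgc⟩
    refine ⟨⟨fun x => ⟨(m.1 x).val, mem x⟩, t, ht, fun x n hn => ?_⟩,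
      AsmObj.hom_ext fun _ => rfl⟩
    obtain ⟨c, htc, hgc⟩ := hc x n hn
    exact ⟨c.val, ⟨c.2, congrArg Subtype.val hgc⟩, htc⟩

theorem exists_comp_eq_iff_exists_comp_jHom_eq {A B C : RecCat} (f : B ⟶ A) (g : C ⟶ A) :
    (∃ h : B ⟶ C, h ≫ g = f) ↔ ∃ k : imAsm f ⟶ imAsm g, k ≫ jHom g = jHom f := by
  rw [RecCat.exists_comp_eq_iff, exists_comp_jHom_eq_iff]
  refine exists_congr fun t => and_congr_right fun _ => ⟨?_, ?_⟩
  · rintro H x n ⟨hn, hfn⟩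
    obtain ⟨c, htc, hgc⟩ := H ⟨n, hn⟩
    exact ⟨c, htc, hgc.trans (Subtype.ext hfn)⟩
  · intro H b
    exact H ⟨happ f b, b, rfl⟩ b.val ⟨b.2, rfl⟩

def AsmObj.realizers (X : AsmObj) : RecCat := RecCat.ofSet {n | ∃ x, n ∈ X.real x}

/-- The element realized by `n`; it is unique when `X` is modest. -/
noncomputable def AsmObj.realized (X : AsmObj) (n : X.realizers) : X.carrier := n.2.choose

theorem AsmObj.realized_mem (X : AsmObj) (n : X.realizers) : n.val ∈ X.real (X.realized n) :=
  n.2.choose_spec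

theorem AsmObj.IsModest.realized_eq {X : AsmObj} (hX : X.IsModest) {x : X.carrier} {n : ℕ}
    (hn : n ∈ X.real x) : X.realized ⟨n, x, hn⟩ = x :=
  hX _ _ ⟨n, X.realized_mem _, hn⟩

noncomputable def AsmObj.onRealizers {X : AsmObj} {A : RecCat} (m : X ⟶ SglObj A) :
    X.realizers ⟶ A :=
  ⟨fun n => m.1 (X.realized n), by
    obtain ⟨u, hu, hm⟩ := m.2
    refine ⟨u, hu, fun n => ?_⟩
    obtain ⟨v, hv, huv⟩ := hm _ n.val (X.realized_mem n)
    exact huv.trans (congrArg Part.some hv)⟩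

theorem AsmObj.IsModest.onRealizers_apply {X : AsmObj} {A : RecCat} (hX : X.IsModest)
    (m : X ⟶ SglObj A) {x : X.carrier} {n : ℕ} (hn : n ∈ X.real x) :
    hfun (X.onRealizers m) ⟨n, x, hn⟩ = m.1 x :=
  congrArg m.1 (hX.realized_eq hn)

theorem exists_jHom_mutually_factors_of_mono {A : RecCat} {X : AsmObj} (m : X ⟶ SglObj A)
    [Mono m] :
    ∃ (B : RecCat) (f : B ⟶ A) (k₁ : imAsm f ⟶ X) (k₂ : X ⟶ imAsm f),
      k₁ ≫ m = jHom f ∧ k₂ ≫ jHom f = m := by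
  have hX : X.IsModest := (isModest_sglObj A).of_mono m
  set f := X.onRealizers m
  obtain ⟨k₂, hk₂⟩ := (exists_comp_jHom_eq_iff f m).2
    ⟨fun n => n, Nat.Partrec.of_primrec Nat.Primrec.id, fun x n hn =>
      ⟨⟨n, x, hn⟩, rfl, hX.onRealizers_apply m hn⟩⟩
  let k₁ : (imAsm f).carrier → X.carrier := fun c => X.realized c.2.choose
  have hk₁ : ∀ c, (m.1 (k₁ c)).val = c.val := fun c => c.2.choose_spec
  refine ⟨_, f, ⟨k₁, fun n => n, Nat.Partrec.of_primrec Nat.Primrec.id, ?_⟩, k₂,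
    AsmObj.hom_ext fun c => Subtype.ext (hk₁ c), hk₂⟩
  rintro c n ⟨hn, hfn⟩
  have hrealized : X.realized ⟨n, hn⟩ = k₁ c :=
    AsmObj.injective_of_mono m (Subtype.ext (hfn.trans (hk₁ c).symm))
  exact ⟨n, hrealized ▸ X.realized_mem ⟨n, hn⟩, rfl⟩

section PairPullback

variable {A A' B : RecCat} (f : B ⟶ A) (h : A' ⟶ A)

/-- The pullback of `f` and `h` in `Rec`, with `(b, a)` encoded by `Nat.pair b a`. -/
def pairPullback : RecCat :=
  RecCat.ofSet {n | ∃ (hb : n.unpair.1 ∈ B.carrier) (ha : n.unpair.2 ∈ A'.carrier),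
    happ f ⟨n.unpair.1, hb⟩ = happ h ⟨n.unpair.2, ha⟩}

def pairPullback.fst : pairPullback f h ⟶ B :=
  ⟨fun p => ⟨p.val.unpair.1, p.2.choose⟩, (fun n => n.unpair.1 : ℕ → ℕ),
    Nat.Partrec.of_primrec Nat.Primrec.left, fun _ => rfl⟩

def pairPullback.snd : pairPullback f h ⟶ A' :=
  ⟨fun p => ⟨p.val.unpair.2, p.2.choose_spec.choose⟩, (fun n => n.unpair.2 : ℕ → ℕ),
    Nat.Partrec.of_primrec Nat.Primrec.right, fun _ => rfl⟩

theorem pairPullback.condition :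
    pairPullback.fst f h ≫ f = pairPullback.snd f h ≫ h :=
  RecCat.hom_ext fun p => Subtype.ext p.2.choose_spec.choose_spec

theorem pair_mem_pairPullback {b : B} {a : A'} (hba : hfun f b = hfun h a) :
    Nat.pair b.val a.val ∈ (pairPullback f h).carrier := by
  refine ⟨?_, ?_, ?_⟩ <;> simp only [Nat.unpair_pair]
  exacts [b.2, a.2, congrArg Subtype.val hba]

end PairPullback

theorem exists_partrec_pullback_lift {A A' B W : RecCat} {f : B ⟶ A} {h : A' ⟶ A}
    {w : W ⟶ B} {f' : W ⟶ A'} (hP : IsPullback w f' f h) :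
    ∃ s : ℕ →. ℕ, Nat.Partrec s ∧ ∀ (b : B) (a : A'), hfun f b = hfun h a →
      ∃ c : W, s (Nat.pair b.val a.val) = Part.some c.val ∧ hfun f' c = a := by
  let σ := hP.lift _ _ (pairPullback.condition f h)
  have hσ : σ ≫ f' = pairPullback.snd f h := hP.lift_snd _ _ _
  obtain ⟨s, hs, hσs⟩ := σ.2
  refine ⟨s, hs, fun b a hba => ?_⟩
  have hmem := pair_mem_pairPullback f h hba
  refine ⟨σ.1 ⟨_, hmem⟩, hσs ⟨_, hmem⟩, ?_⟩
  refine (congrFun (congrArg Subtype.val hσ) _).trans (Subtype.ext ?_)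
  exact congrArg Prod.snd (Nat.unpair_pair b.val a.val)

theorem jHom_pullback_mutually_factors {A A' B W : RecCat} {h : A' ⟶ A} {f : B ⟶ A}
    {w : W ⟶ B} {f' : W ⟶ A'} (hRec : IsPullback w f' f h) {V : AsmObj} {v₁ : V ⟶ imAsm f}
    {v₂ : V ⟶ SglObj A'} (hAsm : IsPullback v₁ v₂ (jHom f) (Sgl.map h)) :
    ∃ (k₁ : imAsm f' ⟶ V) (k₂ : V ⟶ imAsm f'), k₁ ≫ v₂ = jHom f' ∧ k₂ ≫ jHom f' = v₂ := by
  obtain ⟨p, hp⟩ := (exists_comp_jHom_eq_iff f (jHom f' ≫ Sgl.map h)).2 <| by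
    obtain ⟨t, ht, htw⟩ := w.2
    refine ⟨t, ht, fun x n ⟨hn, hfn⟩ => ⟨w.1 ⟨n, hn⟩, htw ⟨n, hn⟩, ?_⟩⟩
    exact (congrFun (congrArg Subtype.val hRec.w) ⟨n, hn⟩).trans
      (congrArg (hfun h) (Subtype.ext hfn))
  obtain ⟨k₂, hk₂⟩ := (exists_comp_jHom_eq_iff f' v₂).2 <| by
    obtain ⟨s, hs, hsf'⟩ := exists_partrec_pullback_lift hRec
    obtain ⟨t₁, ht₁, hv₁⟩ := v₁.2
    obtain ⟨t₂, ht₂, hv₂⟩ := v₂.2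
    -- realizers of `v₁ x` are points of `B`, and together with `v₂ x` they lie in the pullback
    refine ⟨fun n => (t₁ n).bind fun b => (t₂ n).bind fun a => s (Nat.pair b a), ?_, ?_⟩
    · exact Partrec.nat_iff.1 <| (Partrec.nat_iff.2 ht₁).bind
        (((Partrec.nat_iff.2 ht₂).comp Computable.fst).bind
          ((Partrec.nat_iff.2 hs).comp
            ((Primrec₂.natPair.comp (Primrec.snd.comp Primrec.fst) Primrec.snd).to_comp)))
    · intro x n hn
      obtain ⟨b, ⟨hb, hfb⟩, htb⟩ := hv₁ x n hn
      obtain ⟨a, rfl, hta⟩ := hv₂ x n hn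
      have hv₁₂ : (v₁.1 x).val = happ h (v₂.1 x) :=
        congrArg Subtype.val (congrFun (congrArg Subtype.val hAsm.w) x)
      have hba : hfun f ⟨b, hb⟩ = hfun h (v₂.1 x) := Subtype.ext (hfb.trans hv₁₂)
      obtain ⟨c, hsc, hf'c⟩ := hsf' ⟨b, hb⟩ _ hba
      refine ⟨c, ?_, hf'c⟩
      simp only [htb, hta, Part.bind_some, hsc]
  exact ⟨hAsm.lift p (jHom f') hp, k₂, hAsm.lift_snd _ _ _, hk₂⟩

/-- Weak subobjects in `Rec` correspond to subobjects in `Asm`: `[f] ↦ [jHom f]` induces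
an order-isomorphism between `wSub_Rec(A)` and `Sub_Asm(Sgl A)` — each `jHom f` is monic,
the assignment preserves and reflects the order, every subobject of `Sgl A` arises this
way up to mutual factorization, and the assignment commutes with reindexing by pullback
along morphisms of `Rec`. -/
theorem rec_weak_subobjects_eq_asm_subobjects :
    ∀ A : RecCat,
      (∀ (B : RecCat) (f : B ⟶ A), Mono (jHom f)) ∧
      (∀ (B C : RecCat) (f : B ⟶ A) (g : C ⟶ A),
        (∃ h : B ⟶ C, h ≫ g = f) ↔
        (∃ k : imAsm f ⟶ imAsm g, k ≫ jHom g = jHom f)) ∧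
      (∀ (X : AsmObj) (m : X ⟶ SglObj A), Mono m →
        ∃ (B : RecCat) (f : B ⟶ A) (k₁ : imAsm f ⟶ X) (k₂ : X ⟶ imAsm f),
          k₁ ≫ m = jHom f ∧ k₂ ≫ jHom f = m) ∧
      (∀ (A' : RecCat) (h : A' ⟶ A) (B : RecCat) (f : B ⟶ A)
         (W : RecCat) (w : W ⟶ B) (f' : W ⟶ A'),
        IsPullback w f' f h →
        ∀ (V : AsmObj) (v₁ : V ⟶ imAsm f) (v₂ : V ⟶ SglObj A'),
          IsPullback v₁ v₂ (jHom f) (Sgl.map h) →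
          ∃ (k₁ : imAsm f' ⟶ V) (k₂ : V ⟶ imAsm f'),
            k₁ ≫ v₂ = jHom f' ∧ k₂ ≫ jHom f' = v₂) := fun _ =>
  ⟨fun _ => mono_jHom,
    fun _ _ => exists_comp_eq_iff_exists_comp_jHom_eq,
    fun _ m _ => exists_jHom_mutually_factors_of_mono m,
    fun _ _ _ _ _ _ _ hRec _ _ _ hAsm => jHom_pullback_mutually_factors hRec hAsm⟩

end RecPaper
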